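/- arXiv:math/0003077 — 5 statements merged into one kernel-verified Lean document; each statement's English description precedes it below -/
import Mathlib

section
/- The number of pairs (α, β) of families of natural numbers α_{k,j}, β_{k,j} (indexed over 1 ≤ k ≤ l and 1 ≤ j ≤ s_k) satisfying, for each i = 1,...,l, the relation Σ_{k=i}^{l} Σ_{j=1}^{s_i} (α_{k,j} + β_{k,j}) = d_i, equals the coefficient of t_1^{d_1}···t_l^{d_l} in the formal power series ∏_{1 ≤ i ≤ j ≤ l} (1 - t_i t_{i+1} ··· t_j)^{-2(s_i - s_{i-1})}. -/
/-!
The `i`-th relation involves `α_{k,j}` and `β_{k,j}` exactly when `a ≤ i ≤ k`, where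
`a = block s j` is the index with `s_{a-1} < j ≤ s_a`. So each variable attached to the cell
`(k, j)` contributes the monomial `t_a ⋯ t_k`, and the number of solutions is the coefficient of
`t^d` in the product, over all variables, of the geometric series `(1 - t_a ⋯ t_k)⁻¹`. Grouping
the `2 (s_a - s_{a-1})` variables sharing the block `a` and the row `k` gives the product over
`1 ≤ a ≤ k ≤ l`.
-/

def pairsSet (l : ℕ) : Finset (ℕ × ℕ) :=
  (Finset.Icc 1 l ×ˢ Finset.Icc 1 l).filter fun p => p.1 ≤ p.2

open Finset MvPowerSeries

section Geometric

theorem exists_eq_nsmul_iff_eq_zero_or {M : Type*} [AddCommMonoid M] [PartialOrder M]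
    [CanonicallyOrderedAdd M] [Sub M] [OrderedSub M] [AddLeftReflectLE M] {E f : M} :
    (∃ n : ℕ, f = n • E) ↔ f = 0 ∨ E ≤ f ∧ ∃ n : ℕ, f - E = n • E := by
  constructor
  · rintro ⟨_ | n, rfl⟩
    · simp
    · refine Or.inr ⟨?_, n, ?_⟩
      · rw [succ_nsmul]; exact le_add_self
      · rw [succ_nsmul, add_tsub_cancel_right]
  · rintro (rfl | ⟨hEf, n, hn⟩)
    · exact ⟨0, by simp⟩
    · exact ⟨n + 1, by rw [succ_nsmul, ← hn, tsub_add_cancel_of_le hEf]⟩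

variable {σ ι K : Type*} [Field K]

open scoped Classical in
theorem coeff_inv_one_sub_monomial {E : σ →₀ ℕ} (hE : E ≠ 0) (f : σ →₀ ℕ) :
    coeff f (1 - monomial E (1 : K))⁻¹ = if ∃ n : ℕ, f = n • E then 1 else 0 := by
  let G : MvPowerSeries σ K := fun f => if ∃ n : ℕ, f = n • E then 1 else 0
  have hconst : constantCoeff (1 - monomial E (1 : K)) ≠ 0 := by
    rw [map_sub, map_one, ← coeff_zero_eq_constantCoeff_apply, coeff_monomial,
      if_neg (Ne.symm hE), sub_zero]
    exact one_ne_zero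
  suffices (1 - monomial E (1 : K))⁻¹ = G from this ▸ rfl
  rw [MvPowerSeries.inv_eq_iff_mul_eq_one hconst]
  ext f
  have hG : ∀ f, coeff f G = if ∃ n : ℕ, f = n • E then 1 else 0 := fun _ => rfl
  rw [mul_sub, mul_one, map_sub, coeff_mul_monomial, coeff_one, hG, hG,
    exists_eq_nsmul_iff_eq_zero_or]
  by_cases hf : f = 0
  · subst hf
    simp [hE]
  · by_cases hEf : E ≤ f <;> simp [hf, hEf]

open scoped Classical in
theorem card_filter_finsuppAntidiag_nsmul (S : Finset ι) {E : ι → σ →₀ ℕ}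
    (hE : ∀ x ∈ S, E x ≠ 0) (D : σ →₀ ℕ) :
    Nat.card {n : ι → ℕ // (∀ x ∉ S, n x = 0) ∧ ∑ x ∈ S, n x • E x = D} =
      #{u ∈ S.finsuppAntidiag D | ∀ x ∈ S, ∃ n : ℕ, u x = n • E x} := by
  rw [← Nat.card_eq_finsetCard]
  refine Nat.card_eq_of_bijective
    (fun n => ⟨Finsupp.onFinset S (fun x => n.1 x • E x) fun x hx => ?_, ?_⟩) ⟨?_, ?_⟩
  · by_contra hxS
    simp [n.2.1 x hxS] at hx
  · simp only [mem_filter, mem_finsuppAntidiag, Finsupp.onFinset_apply]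
    exact ⟨⟨(sum_congr rfl fun x _ => rfl).trans n.2.2, Finsupp.support_onFinset_subset⟩,
      fun x _ => ⟨n.1 x, rfl⟩⟩
  · intro n m hnm
    ext x
    have hx := Finsupp.ext_iff.mp (congrArg Subtype.val hnm) x
    simp only [Finsupp.onFinset_apply] at hx
    by_cases hxS : x ∈ S
    · obtain ⟨r, hr⟩ := Finsupp.support_nonempty_iff.mpr (hE x hxS)
      simpa [Finsupp.mem_support_iff.mp hr] using DFunLike.congr_fun hx r
    · rw [n.2.1 x hxS, m.2.1 x hxS]
  · rintro ⟨u, hu⟩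
    simp only [mem_filter, mem_finsuppAntidiag] at hu
    obtain ⟨⟨hsum, hsupp⟩, hmul⟩ := hu
    choose! n hn using hmul
    refine ⟨⟨fun x => if x ∈ S then n x else 0, fun x hx => if_neg hx, ?_⟩, ?_⟩
    · rw [← hsum]
      exact sum_congr rfl fun x hx => by simp [hx, hn x hx]
    · ext1
      refine Finsupp.ext fun x => ?_
      by_cases hxS : x ∈ S
      · simp [hxS, hn x hxS]
      · simp [hxS, Finsupp.notMem_support_iff.mp fun h => hxS (hsupp h)]

theorem coeff_prod_inv_one_sub_monomial (S : Finset ι) {E : ι → σ →₀ ℕ}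
    (hE : ∀ x ∈ S, E x ≠ 0) (D : σ →₀ ℕ) :
    coeff D (∏ x ∈ S, (1 - monomial (E x) (1 : K))⁻¹) =
      (Nat.card {n : ι → ℕ // (∀ x ∉ S, n x = 0) ∧ ∑ x ∈ S, n x • E x = D} : K) := by
  classical
  have hterm : ∀ u ∈ S.finsuppAntidiag D,
      ∏ x ∈ S, coeff (u x) (1 - monomial (E x) (1 : K))⁻¹ =
        if ∀ x ∈ S, ∃ n : ℕ, u x = n • E x then (1 : K) else 0 := fun u _ => by
    rw [← prod_boole]
    exact prod_congr rfl fun x hx => coeff_inv_one_sub_monomial (hE x hx) (u x)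
  rw [coeff_prod, sum_congr rfl hterm, sum_boole, ← card_filter_finsuppAntidiag_nsmul S hE D]

end Geometric

theorem MvPowerSeries.prod_X {σ R : Type*} [CommSemiring R] (t : Finset σ) :
    ∏ r ∈ t, (X r : MvPowerSeries σ R) = monomial (∑ r ∈ t, Finsupp.single r 1) 1 := by
  simp_rw [X_def, prod_monomial, prod_const_one]

noncomputable def intervalExponent (a b : ℕ) : ℕ →₀ ℕ := ∑ r ∈ Icc a b, Finsupp.single r 1

theorem intervalExponent_apply (a b r : ℕ) :
    intervalExponent a b r = if a ≤ r ∧ r ≤ b then 1 else 0 := by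
  simp [intervalExponent, Finsupp.finsetSum_apply, Finsupp.single_apply]

theorem intervalExponent_ne_zero {a b : ℕ} (h : a ≤ b) : intervalExponent a b ≠ 0 :=
  Finsupp.ne_iff.mpr ⟨b, by simp [intervalExponent_apply, h]⟩

noncomputable def block (s : ℕ → ℕ) (j : ℕ) : ℕ := sInf {a | j ≤ s a}

def cells (s : ℕ → ℕ) (l : ℕ) : Finset (ℕ × ℕ) :=
  (Icc 1 l).biUnion fun k => {k} ×ˢ Icc 1 (s k)

theorem mem_cells {s : ℕ → ℕ} {l : ℕ} {c : ℕ × ℕ} :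
    c ∈ cells s l ↔ 1 ≤ c.1 ∧ c.1 ≤ l ∧ 1 ≤ c.2 ∧ c.2 ≤ s c.1 := by
  simp only [cells, mem_biUnion, mem_product, mem_singleton, mem_Icc]
  constructor
  · rintro ⟨k, hk, rfl, hj⟩
    exact ⟨hk.1, hk.2, hj⟩
  · rintro ⟨h1, h2, hj⟩
    exact ⟨c.1, ⟨h1, h2⟩, rfl, hj⟩

theorem forall_notMem_cells_disjSum_iff {s : ℕ → ℕ} {l : ℕ} (α β : ℕ → ℕ → ℕ) :
    (∀ k j : ℕ, (k < 1 ∨ l < k ∨ j < 1 ∨ s k < j) → α k j = 0 ∧ β k j = 0) ↔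
      ∀ x ∉ (cells s l).disjSum (cells s l),
        Sum.elim (Function.uncurry α) (Function.uncurry β) x = 0 := by
  have hcells (k j : ℕ) : (k, j) ∉ cells s l ↔ k < 1 ∨ l < k ∨ j < 1 ∨ s k < j := by
    simp only [mem_cells]
    omega
  simp only [Sum.forall, inl_mem_disjSum, inr_mem_disjSum, Sum.elim_inl, Sum.elim_inr,
    Prod.forall, Function.uncurry_apply_pair, hcells, imp_and, forall_and]

section Blocks

variable {s : ℕ → ℕ} {l : ℕ}

theorem MonotoneOn.apply_le_apply_of_le_of_le (hs : MonotoneOn s (Set.Iic l)) {a b : ℕ}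
    (hab : a ≤ b) (hbl : b ≤ l) : s a ≤ s b :=
  hs (Set.mem_Iic.mpr (hab.trans hbl)) (Set.mem_Iic.mpr hbl) hab

theorem block_le_iff (hs : MonotoneOn s (Set.Iic l)) {i j : ℕ} (hj : j ≤ s l) (hi : i ≤ l) :
    block s j ≤ i ↔ j ≤ s i := by
  refine ⟨fun h => ?_, fun h => Nat.sInf_le h⟩
  have hmem : j ≤ s (block s j) := Nat.sInf_mem (s := {a | j ≤ s a}) ⟨l, hj⟩
  exact hmem.trans (hs.apply_le_apply_of_le_of_le h hi)

theorem block_eq_iff (hs : MonotoneOn s (Set.Iic l)) {a j : ℕ} (hj : j ≤ s l) (ha : 1 ≤ a)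
    (hal : a ≤ l) : block s j = a ↔ s (a - 1) < j ∧ j ≤ s a := by
  have h1 := block_le_iff hs hj hal
  have h2 := block_le_iff hs hj (i := a - 1) (by omega)
  omega

theorem snd_le_of_mem_cells (hs : MonotoneOn s (Set.Iic l)) {c : ℕ × ℕ} (hc : c ∈ cells s l) :
    c.2 ≤ s l := by
  rw [mem_cells] at hc
  exact hc.2.2.2.trans (hs.apply_le_apply_of_le_of_le hc.2.1 le_rfl)

theorem block_mem_pairsSet (hs : MonotoneOn s (Set.Iic l)) (h0 : s 0 = 0) {c : ℕ × ℕ}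
    (hc : c ∈ cells s l) : (block s c.2, c.1) ∈ pairsSet l := by
  have hsl := snd_le_of_mem_cells hs hc
  rw [mem_cells] at hc
  have h1 := block_le_iff hs hsl (i := 0) (Nat.zero_le l)
  have h2 := block_le_iff hs hsl hc.2.1
  simp only [pairsSet, mem_filter, mem_product, mem_Icc]
  omega

theorem filter_cells_block_eq (hs : MonotoneOn s (Set.Iic l)) {a k : ℕ} (hp : (a, k) ∈ pairsSet l) :
    {c ∈ cells s l | (block s c.2, c.1) = (a, k)} = {k} ×ˢ Ioc (s (a - 1)) (s a) := by
  simp only [pairsSet, mem_filter, mem_product, mem_Icc] at hp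
  have hsa : s a ≤ s k := hs.apply_le_apply_of_le_of_le hp.2 hp.1.2.2
  have hsk : s k ≤ s l := hs.apply_le_apply_of_le_of_le hp.1.2.2 le_rfl
  ext ⟨k', j⟩
  simp only [mem_filter, mem_cells, Prod.mk.injEq, mem_product, mem_singleton, mem_Ioc]
  constructor
  · rintro ⟨⟨-, hkl, -, hjk⟩, hb, rfl⟩
    exact ⟨rfl, (block_eq_iff hs (hjk.trans (hs.apply_le_apply_of_le_of_le hkl le_rfl))
      hp.1.1.1 (hp.2.trans hkl)).mp hb⟩
  · rintro ⟨rfl, hj⟩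
    exact ⟨⟨by omega, hp.1.2.2, by omega, hj.2.trans hsa⟩,
      (block_eq_iff hs (hj.2.trans (hsa.trans hsk)) hp.1.1.1 (hp.2.trans hp.1.2.2)).mpr hj, rfl⟩

theorem prod_cells_block_eq_prod_pairsSet {M : Type*} [CommMonoid M] (hs : MonotoneOn s (Set.Iic l))
    (h0 : s 0 = 0) (f : ℕ × ℕ → M) :
    ∏ c ∈ cells s l, f (block s c.2, c.1) = ∏ p ∈ pairsSet l, f p ^ (s p.1 - s (p.1 - 1)) := by
  rw [← prod_fiberwise_of_maps_to' (fun c hc => block_mem_pairsSet hs h0 hc) f]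
  refine prod_congr rfl fun ⟨a, k⟩ hp => ?_
  rw [prod_const, filter_cells_block_eq hs hp, card_product, card_singleton, Nat.card_Ioc, one_mul]

theorem sum_cells_smul_intervalExponent_apply (hs : MonotoneOn s (Set.Iic l)) (h0 : s 0 = 0)
    (α : ℕ → ℕ → ℕ) (i : ℕ) :
    (∑ c ∈ cells s l, α c.1 c.2 • intervalExponent (block s c.2) c.1) i =
      ∑ k ∈ Icc i l, ∑ j ∈ Icc 1 (s i), α k j := by
  have hcells : {c ∈ cells s l | block s c.2 ≤ i ∧ i ≤ c.1} = Icc i l ×ˢ Icc 1 (s i) := by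
    ext ⟨k, j⟩
    simp only [mem_filter, mem_cells, mem_product, mem_Icc]
    constructor
    · rintro ⟨⟨-, hkl, hj1, hjk⟩, hb, hik⟩
      have hsk : s k ≤ s l := hs.apply_le_apply_of_le_of_le hkl le_rfl
      exact ⟨⟨hik, hkl⟩, hj1, (block_le_iff hs (hjk.trans hsk) (hik.trans hkl)).mp hb⟩
    · rintro ⟨⟨hik, hkl⟩, hj1, hji⟩
      have hsi : s i ≤ s k := hs.apply_le_apply_of_le_of_le hik hkl
      have hsk : s k ≤ s l := hs.apply_le_apply_of_le_of_le hkl le_rfl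
      have hi : i ≠ 0 := by rintro rfl; omega
      exact ⟨⟨by omega, hkl, hj1, hji.trans hsi⟩,
        (block_le_iff hs (hji.trans (hsi.trans hsk)) (hik.trans hkl)).mpr hji, hik⟩
  simp only [Finsupp.finsetSum_apply, Finsupp.smul_apply, intervalExponent_apply, smul_eq_mul,
    mul_ite, mul_one, mul_zero]
  rw [← sum_filter, hcells, sum_product]

theorem sum_cells_add_sum_cells_eq_iff (hs : MonotoneOn s (Set.Iic l)) (h0 : s 0 = 0)
    (α β : ℕ → ℕ → ℕ) (d : ℕ → ℕ) :
    ∑ c ∈ cells s l, α c.1 c.2 • intervalExponent (block s c.2) c.1 +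
        ∑ c ∈ cells s l, β c.1 c.2 • intervalExponent (block s c.2) c.1 =
        ∑ i ∈ Icc 1 l, Finsupp.single i (d i) ↔
      ∀ i ∈ Icc 1 l, ∑ k ∈ Icc i l, ∑ j ∈ Icc 1 (s i), (α k j + β k j) = d i := by
  have hD (i : ℕ) : (∑ i ∈ Icc 1 l, Finsupp.single i (d i)) i = if i ∈ Icc 1 l then d i else 0 := by
    simp [Finsupp.finsetSum_apply, Finsupp.single_apply]
  have hsum (i : ℕ) :
      (∑ c ∈ cells s l, α c.1 c.2 • intervalExponent (block s c.2) c.1 +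
        ∑ c ∈ cells s l, β c.1 c.2 • intervalExponent (block s c.2) c.1) i =
        ∑ k ∈ Icc i l, ∑ j ∈ Icc 1 (s i), (α k j + β k j) := by
    simp only [Finsupp.add_apply, sum_cells_smul_intervalExponent_apply hs h0, sum_add_distrib]
  simp only [Finsupp.ext_iff, hsum, hD]
  refine ⟨fun h i hi => by simpa [hi] using h i, fun h i => ?_⟩
  split_ifs with hi
  · exact h i hi
  · rw [mem_Icc] at hi
    rcases Nat.eq_zero_or_pos i with rfl | hi1
    · simp [h0]
    · rw [Icc_eq_empty (by omega), sum_empty]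

end Blocks

/-- The number of pairs `(α, β)` of families of natural numbers indexed by `1 ≤ k ≤ l`,
`1 ≤ j ≤ s k` (extended by zero outside that range) satisfying
`Σ_{k=i}^l Σ_{j=1}^{s_i} (α_{k,j} + β_{k,j}) = d_i` for each `i = 1,...,l`, equals the
coefficient of `t_1^{d_1}···t_l^{d_l}` in `∏_{1≤i≤j≤l} (1 - t_i···t_j)^{-2(s_i - s_{i-1})}`,
a formal power series in variables `t_1, ..., t_l` (here `t_i` is `X i`). -/
theorem stmt1 (l : ℕ) (s : ℕ → ℕ) (h0 : s 0 = 0) (hmono : ∀ i < l, s i < s (i + 1))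
    (d : ℕ → ℕ) :
    (Nat.card {p : (ℕ → ℕ → ℕ) × (ℕ → ℕ → ℕ) //
      (∀ k j : ℕ, (k < 1 ∨ l < k ∨ j < 1 ∨ s k < j) → p.1 k j = 0 ∧ p.2 k j = 0) ∧
      ∀ i ∈ Finset.Icc 1 l,
        (∑ k ∈ Finset.Icc i l, ∑ j ∈ Finset.Icc 1 (s i), (p.1 k j + p.2 k j)) = d i} : ℚ) =
    MvPowerSeries.coeff (∑ i ∈ Finset.Icc 1 l, Finsupp.single i (d i))
      (∏ p ∈ pairsSet l,
        ((1 - ∏ r ∈ Finset.Icc p.1 p.2, (MvPowerSeries.X r : MvPowerSeries ℕ ℚ))⁻¹) ^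
          (2 * (s p.1 - s (p.1 - 1)))) := by
  have hs : MonotoneOn s (Set.Iic l) :=
    monotoneOn_of_le_add_one Set.ordConnected_Iic fun i _ _ hi => (hmono i hi).le
  let e : ℕ × ℕ → ℕ →₀ ℕ := fun c => intervalExponent (block s c.2) c.1
  let g : (ℕ →₀ ℕ) → MvPowerSeries ℕ ℚ := fun E => (1 - monomial E 1)⁻¹
  have hprod : ∏ p ∈ pairsSet l,
        ((1 - ∏ r ∈ Icc p.1 p.2, (X r : MvPowerSeries ℕ ℚ))⁻¹) ^ (2 * (s p.1 - s (p.1 - 1))) =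
      ∏ x ∈ (cells s l).disjSum (cells s l), g (Sum.elim e e x) := by
    simp_rw [prod_X, pow_mul', prod_pow, prod_disjSum, Sum.elim_inl, Sum.elim_inr, ← sq]
    congr 1
    exact (prod_cells_block_eq_prod_pairsSet hs h0 fun p => g (intervalExponent p.1 p.2)).symm
  have hE : ∀ c ∈ cells s l, e c ≠ 0 := fun c hc =>
    intervalExponent_ne_zero (mem_filter.mp (block_mem_pairsSet hs h0 hc)).2
  rw [hprod, coeff_prod_inv_one_sub_monomial _ fun x hx => by
    rcases x with c | c <;> exact hE c (by simpa using hx)]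
  congr 1
  refine Nat.card_congr (Equiv.subtypeEquiv ((Equiv.prodCongr (Equiv.curry _ _ _).symm
    (Equiv.curry _ _ _).symm).trans (Equiv.sumArrowEquivProdArrow _ _ _).symm) fun ⟨α, β⟩ => ?_)
  refine and_congr (forall_notMem_cells_disjSum_iff α β) ?_
  rw [sum_disjSum]
  exact (sum_cells_add_sum_cells_eq_iff hs h0 α β d).symm
end

section
/- The sum of z^{inv(σ)} over all permutations σ in S(n; s_1,...,s_l) (those increasing on each block (s_{i-1}, s_i]) equals the Gaussian multinomial: ∏_{i=1}^{n}(1 - z^i) / ∏_{j=1}^{l+1} ∏_{i=1}^{s_j - s_{j-1}} (1 - z^i). -/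
def inversions (n : ℕ) (σ : Equiv.Perm (Fin n)) : ℕ :=
  (Finset.univ.filter fun p : Fin n × Fin n => p.1 < p.2 ∧ σ p.2 < σ p.1).card

/-!
Induct on `n` by following the value `0`. In a permutation increasing on the blocks
`[s k, s (k + 1))`, the position `σ⁻¹ 0` must be the first position `s k` of a nonempty block.
The `s k` positions before it are exactly the inversions involving it, and deleting it leaves a
block-increasing permutation of `n - 1` letters for the blocks with the `k`-th one shortened by
one. Hence `∑_σ z ^ inv σ = ∑_k z ^ (s k) · (the same sum for the shortened blocks)`. Multiplied by
`∏_j (z; z)_{m_j}`, the `k`-th term becomes `(z ^ (s k) - z ^ (s (k + 1))) · (z; z)_{n - 1}` by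
induction, and the sum over `k` telescopes to `(1 - z ^ n) · (z; z)_{n - 1} = (z; z)_n`.
-/

open Finset Equiv

lemma Fin.val_succAbove_eq_ite {n : ℕ} (p : Fin (n + 1)) (i : Fin n) :
    (p.succAbove i : ℕ) = if (i : ℕ) < p then (i : ℕ) else i + 1 := by
  unfold Fin.succAbove
  split_ifs <;> simp_all [Fin.lt_def]

section qPochhammer

variable {R : Type*} [CommRing R]

def qPochhammer (z : R) (m : ℕ) : R := ∏ i ∈ Icc 1 m, (1 - z ^ i)

lemma qPochhammer_succ (z : R) (m : ℕ) :
    qPochhammer z (m + 1) = qPochhammer z m * (1 - z ^ (m + 1)) :=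
  prod_Icc_succ_top (by omega) _

end qPochhammer

section Blocks

variable {s : ℕ → ℕ}

lemma exists_block_of_lt {L x : ℕ} (h0 : s 0 ≤ x) (hx : x < s L) :
    ∃ k < L, s k ≤ x ∧ x < s (k + 1) := by
  induction L with
  | zero => omega
  | succ L ih =>
    by_cases hL : x < s L
    · obtain ⟨k, hk, h⟩ := ih hL
      exact ⟨k, by omega, h⟩
    · exact ⟨L, by omega, by omega, hx⟩

lemma monotone_comp_min {L : ℕ} (hs : ∀ i < L, s i ≤ s (i + 1)) :
    Monotone fun j => s (min j L) :=
  monotone_nat_of_le_succ fun j => by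
    rcases le_or_gt L j with hj | hj
    · simp only [min_eq_right hj, min_eq_right (hj.trans j.le_succ), le_rfl]
    · simp only [min_eq_left hj.le, min_eq_left (Nat.succ_le_of_lt hj)]
      exact hs j hj

def shrinkBlock (s : ℕ → ℕ) (k j : ℕ) : ℕ := if j ≤ k then s j else s j - 1

variable {k : ℕ}

lemma shrinkBlock_le_iff (hs : Monotone s) (hk : s k < s (k + 1)) (j x : ℕ) :
    shrinkBlock s k j ≤ x ↔ s j ≤ if x < s k then x else x + 1 := by
  unfold shrinkBlock
  rcases le_or_gt j k with hj | hj
  · have := hs hj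
    split_ifs <;> omega
  · have := hs (show k + 1 ≤ j by omega)
    split_ifs <;> omega

lemma monotone_shrinkBlock (hs : Monotone s) (hk : s k < s (k + 1)) :
    Monotone (shrinkBlock s k) := by
  intro i j hij
  unfold shrinkBlock
  split_ifs with hi hj hj
  · exact hs hij
  · have := hs hi
    have := hs (show k + 1 ≤ j by omega)
    omega
  · omega
  · exact Nat.sub_le_sub_right (hs hij) 1

lemma prod_qPochhammer_eq_mul_shrinkBlock {R : Type*} [CommRing R] (z : R) {L : ℕ}
    (hs : Monotone s) (hk : s k < s (k + 1)) (hkL : k < L) :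
    ∏ j ∈ range L, qPochhammer z (s (j + 1) - s j) =
      (1 - z ^ (s (k + 1) - s k)) *
        ∏ j ∈ range L, qPochhammer z (shrinkBlock s k (j + 1) - shrinkBlock s k j) := by
  have hsk : shrinkBlock s k (k + 1) - shrinkBlock s k k + 1 = s (k + 1) - s k := by
    unfold shrinkBlock
    rw [if_pos le_rfl, if_neg (by omega)]
    omega
  have hj : ∀ j ∈ (range L).erase k,
      shrinkBlock s k (j + 1) - shrinkBlock s k j = s (j + 1) - s j := by
    intro j hj
    unfold shrinkBlock
    rcases lt_or_gt_of_ne (ne_of_mem_erase hj) with hjk | hjk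
    · rw [if_pos hjk.le, if_pos (Nat.succ_le_of_lt hjk)]
    · have := hs (show k + 1 ≤ j by omega)
      rw [if_neg (by omega), if_neg (by omega)]
      omega
  rw [← mul_prod_erase _ _ (mem_range.mpr hkL), ← mul_prod_erase (range L) _ (mem_range.mpr hkL),
    ← hsk, qPochhammer_succ, hsk, prod_congr rfl fun j hjk => congrArg _ (hj j hjk)]
  ring

end Blocks

namespace Equiv.Perm

variable {n : ℕ}

lemma inversions_eq_sum_sum_ite (σ : Perm (Fin n)) :
    inversions n σ = ∑ a, ∑ b, if a < b ∧ σ b < σ a then 1 else 0 := by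
  rw [inversions, card_filter, Fintype.sum_prod_type]

def insertZero (p : Fin (n + 1)) (τ : Perm (Fin n)) : Perm (Fin (n + 1)) :=
  (finSuccEquiv' p).trans (τ.optionCongr.trans (finSuccEquiv n).symm)

@[simp]
lemma insertZero_apply_self (p : Fin (n + 1)) (τ : Perm (Fin n)) : insertZero p τ p = 0 := by
  simp [insertZero]

@[simp]
lemma insertZero_apply_succAbove (p : Fin (n + 1)) (τ : Perm (Fin n)) (i : Fin n) :
    insertZero p τ (p.succAbove i) = (τ i).succ := by
  simp [insertZero]

lemma insertZero_injective (p : Fin (n + 1)) : Function.Injective (insertZero p) := by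
  intro τ τ' h
  refine Equiv.ext fun i => ?_
  simpa using congr($h (p.succAbove i))

lemma exists_insertZero_eq {p : Fin (n + 1)} {σ : Perm (Fin (n + 1))} (hσ : σ p = 0) :
    ∃ τ, insertZero p τ = σ := by
  set e := (finSuccEquiv' p).symm.trans (σ.trans (finSuccEquiv n))
  have he : e none = none := by simp [e, hσ]
  have hsome (x : Fin n) : ∃ y, e (some x) = some y :=
    Option.ne_none_iff_exists'.mp fun h => by simpa using e.injective (h.trans he.symm)
  have hoption : (removeNone e).optionCongr = e := by
    ext1 x
    cases x with
    | none => simp [he]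
    | some x => rw [optionCongr_apply, Option.map_some, removeNone_some _ (hsome x)]
  refine ⟨removeNone e, ?_⟩
  ext1 x
  simp [insertZero, hoption, e]

lemma inversions_insertZero (p : Fin (n + 1)) (τ : Perm (Fin n)) :
    inversions (n + 1) (insertZero p τ) = p + inversions n τ := by
  simp only [inversions_eq_sum_sum_ite, Fin.sum_univ_succAbove _ p, insertZero_apply_self,
    insertZero_apply_succAbove, lt_irrefl, if_false, Fin.not_lt_zero, and_false,
    Fin.succAbove_lt_succAbove_iff, Fin.succ_lt_succ_iff, Fin.succ_pos, and_true, zero_add,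
    Fin.succAbove_lt_iff_castSucc_lt, sum_const_zero, sum_add_distrib]
  congr 1
  rw [← card_filter]
  simp only [Fin.lt_def, Fin.val_castSucc]
  rw [Fin.card_filter_val_lt, min_eq_right (Nat.lt_succ_iff.mp p.isLt)]

def IsBlockIncreasing (s : ℕ → ℕ) (σ : Perm (Fin n)) : Prop :=
  ∀ i, ∀ a b : Fin n, s i ≤ a → (a : ℕ) < b → (b : ℕ) < s (i + 1) → σ a < σ b

open scoped Classical in
noncomputable def blockIncreasingPerms (n : ℕ) (s : ℕ → ℕ) : Finset (Perm (Fin n)) :=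
  univ.filter (IsBlockIncreasing s)

lemma mem_blockIncreasingPerms {s : ℕ → ℕ} {σ : Perm (Fin n)} :
    σ ∈ blockIncreasingPerms n s ↔ IsBlockIncreasing s σ := by
  simp [blockIncreasingPerms]

variable {s : ℕ → ℕ}

lemma isBlockIncreasing_comp_min_iff {L : ℕ} (hL : s L = n) (σ : Perm (Fin n)) :
    IsBlockIncreasing (fun j => s (min j L)) σ ↔
      ∀ i < L, ∀ a b : Fin n, s i ≤ a → (a : ℕ) < b → (b : ℕ) < s (i + 1) → σ a < σ b := by
  constructor
  · intro h i hi a b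
    simpa only [min_eq_left hi.le, min_eq_left (Nat.succ_le_of_lt hi)] using h i a b
  · intro h i a b ha hab hb
    dsimp only at ha hb
    rcases lt_or_ge i L with hi | hi
    · rw [min_eq_left hi.le] at ha
      rw [min_eq_left (Nat.succ_le_of_lt hi)] at hb
      exact h i hi a b ha hab hb
    · rw [min_eq_right hi, hL] at ha
      exact absurd a.isLt (not_lt.mpr ha)

lemma isBlockIncreasing_insertZero_iff {k : ℕ} (hs : Monotone s) (hk : s k < s (k + 1))
    {p : Fin (n + 1)} (hp : (p : ℕ) = s k) (τ : Perm (Fin n)) :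
    IsBlockIncreasing s (insertZero p τ) ↔ IsBlockIncreasing (shrinkBlock s k) τ := by
  have hle (j : ℕ) (x : Fin n) : shrinkBlock s k j ≤ x ↔ s j ≤ p.succAbove x := by
    rw [shrinkBlock_le_iff hs hk, Fin.val_succAbove_eq_ite, hp]
  constructor
  · intro hσ i a b ha hab hb
    simpa using hσ i (p.succAbove a) (p.succAbove b) ((hle i a).mp ha)
      (Fin.succAbove_lt_succAbove_iff.mpr hab) (lt_of_not_ge (mt (hle _ b).mpr (not_le.mpr hb)))
  · intro hτ i a b ha hab hb
    rcases eq_or_ne a p with rfl | hap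
    · rw [insertZero_apply_self, Fin.pos_iff_ne_zero, ← insertZero_apply_self a τ,
        (insertZero a τ).injective.ne_iff]
      exact (ne_of_lt hab).symm ∘ congrArg Fin.val
    obtain ⟨a, rfl⟩ := Fin.exists_succAbove_eq hap
    rcases eq_or_ne b p with rfl | hbp
    · -- `b = s k` starts a block, so it shares no block with the smaller `a`
      have hab := Fin.lt_def.mp hab
      have : i < k := lt_of_not_ge fun hki => by have := hs hki; omega
      have := hs (show i + 1 ≤ k by omega)
      omega
    obtain ⟨b, rfl⟩ := Fin.exists_succAbove_eq hbp
    simpa using hτ i a b ((hle i a).mpr ha) (Fin.succAbove_lt_succAbove_iff.mp hab)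
      (lt_of_not_ge (mt (hle _ b).mp (not_le.mpr hb)))

lemma exists_inv_zero_eq_blockStart {L : ℕ} (h0 : s 0 = 0) (hL : s L = n + 1)
    {σ : Perm (Fin (n + 1))} (hσ : IsBlockIncreasing s σ) :
    ∃ k < L, s k < s (k + 1) ∧ ((σ⁻¹ 0 : Fin (n + 1)) : ℕ) = s k := by
  set p := σ⁻¹ 0
  obtain ⟨k, hkL, hkp, hpk⟩ := exists_block_of_lt (s := s) (L := L) (x := p)
    (by rw [h0]; exact Nat.zero_le _) (by rw [hL]; exact p.isLt)
  refine ⟨k, hkL, by omega, ?_⟩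
  by_contra hne
  have := hσ k ⟨s k, by omega⟩ p le_rfl (by simp only; omega) hpk
  simp [p] at this

lemma sum_filter_inv_zero_eq {R : Type*} [CommSemiring R] (z : R) {k : ℕ}
    (hs : Monotone s) (hk : s k < s (k + 1)) (hkn : s k < n + 1) :
    ∑ σ ∈ (blockIncreasingPerms (n + 1) s).filter
        (fun σ => ((σ⁻¹ 0 : Fin (n + 1)) : ℕ) = s k), z ^ inversions (n + 1) σ =
      z ^ s k * ∑ τ ∈ blockIncreasingPerms n (shrinkBlock s k), z ^ inversions n τ := by
  set p : Fin (n + 1) := ⟨s k, hkn⟩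
  have hfilter : (blockIncreasingPerms (n + 1) s).filter
      (fun σ => ((σ⁻¹ 0 : Fin (n + 1)) : ℕ) = s k) =
      (blockIncreasingPerms n (shrinkBlock s k)).image (insertZero p) := by
    ext σ
    have hinv : ((σ⁻¹ 0 : Fin (n + 1)) : ℕ) = s k ↔ σ p = 0 := by
      rw [← Fin.val_mk hkn, Fin.val_inj, Perm.inv_eq_iff_eq, eq_comm]
    simp only [mem_filter, mem_image, mem_blockIncreasingPerms, hinv]
    constructor
    · rintro ⟨hσ, hp⟩
      obtain ⟨τ, rfl⟩ := exists_insertZero_eq hp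
      exact ⟨τ, (isBlockIncreasing_insertZero_iff hs hk rfl τ).mp hσ, rfl⟩
    · rintro ⟨τ, hτ, rfl⟩
      exact ⟨(isBlockIncreasing_insertZero_iff hs hk rfl τ).mpr hτ, insertZero_apply_self p τ⟩
  rw [hfilter, sum_image (insertZero_injective p).injOn, mul_sum]
  simp [inversions_insertZero, pow_add, p]

lemma sum_blockIncreasingPerms_succ {R : Type*} [CommSemiring R] (z : R) {L : ℕ}
    (hs : Monotone s) (h0 : s 0 = 0) (hL : s L = n + 1) :
    ∑ σ ∈ blockIncreasingPerms (n + 1) s, z ^ inversions (n + 1) σ =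
      ∑ k ∈ (range L).filter (fun k => s k < s (k + 1)),
        z ^ s k * ∑ τ ∈ blockIncreasingPerms n (shrinkBlock s k), z ^ inversions n τ := by
  set K := (range L).filter (fun k => s k < s (k + 1))
  have hinj : Set.InjOn s K := by
    intro k hk k' hk' h
    have hk := (mem_filter.mp (mem_coe.mp hk)).2
    have hk' := (mem_filter.mp (mem_coe.mp hk')).2
    by_contra hne
    rcases Nat.lt_or_gt_of_ne hne with hlt | hlt
    · have := hs (show k + 1 ≤ k' by omega); omega
    · have := hs (show k' + 1 ≤ k by omega); omega
  have hmaps : ∀ σ ∈ blockIncreasingPerms (n + 1) s,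
      ((σ⁻¹ 0 : Fin (n + 1)) : ℕ) ∈ K.image s := by
    intro σ hσ
    obtain ⟨k, hkL, hk, hσk⟩ :=
      exists_inv_zero_eq_blockStart h0 hL (mem_blockIncreasingPerms.mp hσ)
    exact mem_image.mpr ⟨k, mem_filter.mpr ⟨mem_range.mpr hkL, hk⟩, hσk.symm⟩
  rw [← sum_fiberwise_of_maps_to hmaps, sum_image hinj]
  refine sum_congr rfl fun k hk => ?_
  obtain ⟨hkL, hk⟩ := mem_filter.mp hk
  have := hs (show k + 1 ≤ L from mem_range.mp hkL)
  exact sum_filter_inv_zero_eq z hs hk (by omega)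

theorem sum_pow_inversions_mul_prod_qPochhammer {R : Type*} [CommRing R] (z : R) (L : ℕ)
    (hs : Monotone s) (h0 : s 0 = 0) (hL : s L = n) :
    (∑ σ ∈ blockIncreasingPerms n s, z ^ inversions n σ) *
      ∏ j ∈ range L, qPochhammer z (s (j + 1) - s j) = qPochhammer z n := by
  induction n generalizing s with
  | zero =>
    have hσ : blockIncreasingPerms 0 s = {1} := by
      ext σ
      simp [mem_blockIncreasingPerms, IsBlockIncreasing, Subsingleton.elim σ 1]
    have hsizes : ∀ j ∈ range L, s (j + 1) - s j = 0 := fun j hj => by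
      have := hs (show j + 1 ≤ L from mem_range.mp hj)
      omega
    rw [prod_eq_one fun j hj => by rw [hsizes j hj]; simp [qPochhammer]]
    simp [hσ, inversions, qPochhammer]
  | succ n ih =>
    rw [sum_blockIncreasingPerms_succ z hs h0 hL, sum_mul]
    calc ∑ k ∈ (range L).filter (fun k => s k < s (k + 1)),
          z ^ s k * (∑ τ ∈ blockIncreasingPerms n (shrinkBlock s k), z ^ inversions n τ) *
            ∏ j ∈ range L, qPochhammer z (s (j + 1) - s j)
        = ∑ k ∈ (range L).filter (fun k => s k < s (k + 1)),
            (z ^ s k - z ^ s (k + 1)) * qPochhammer z n := by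
          refine sum_congr rfl fun k hk => ?_
          obtain ⟨hkL, hk⟩ := mem_filter.mp hk
          have hkL := mem_range.mp hkL
          have h0' : shrinkBlock s k 0 = 0 := by simp [shrinkBlock, h0]
          have hL' : shrinkBlock s k L = n := by simp [shrinkBlock, hL, not_le.mpr hkL]
          have hpow : z ^ s k * (1 - z ^ (s (k + 1) - s k)) = z ^ s k - z ^ s (k + 1) := by
            rw [mul_sub, mul_one, ← pow_add, Nat.add_sub_cancel' hk.le]
          rw [prod_qPochhammer_eq_mul_shrinkBlock z hs hk hkL,
            ← ih (monotone_shrinkBlock hs hk) h0' hL', ← hpow]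
          ring
      _ = ∑ k ∈ range L, (z ^ s k - z ^ s (k + 1)) * qPochhammer z n := by
          refine sum_filter_of_ne fun k _ hne => ?_
          contrapose! hne
          rw [le_antisymm hne (hs k.le_succ), sub_self, zero_mul]
      _ = qPochhammer z (n + 1) := by
          rw [← sum_mul, sum_range_sub', h0, hL, pow_zero, qPochhammer_succ, mul_comm]

end Equiv.Perm

open Equiv.Perm in
/-- The inversion generating function of permutations increasing on each block
`(s_{i-1}, s_i]` is the Gaussian multinomial:
`(Σ_{σ ∈ S(n;s)} z^{inv σ}) ∏_{j=1}^{l+1} ∏_{i=1}^{s_j - s_{j-1}} (1-z^i) = ∏_{i=1}^n (1-z^i)`. -/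
theorem stmt5 (n l : ℕ) (s : ℕ → ℕ) (h0 : s 0 = 0) (hn : s (l + 1) = n)
    (hmono : ∀ i ≤ l, s i < s (i + 1)) :
    (∑ σ ∈ Finset.univ.filter (fun σ : Equiv.Perm (Fin n) =>
        ∀ i ≤ l, ∀ a b : Fin n, s i ≤ (a : ℕ) → (a : ℕ) < (b : ℕ) → (b : ℕ) < s (i + 1) →
          σ a < σ b),
        (Polynomial.X : Polynomial ℚ) ^ inversions n σ) *
      ∏ j ∈ Finset.Icc 1 (l + 1), ∏ i ∈ Finset.Icc 1 (s j - s (j - 1)),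
        (1 - (Polynomial.X : Polynomial ℚ) ^ i) =
    ∏ i ∈ Finset.Icc 1 n, (1 - (Polynomial.X : Polynomial ℚ) ^ i) := by
  -- `s` is arbitrary beyond `l + 1`; freezing it there makes it monotone and changes no block
  have hfilter : Finset.univ.filter (fun σ : Equiv.Perm (Fin n) =>
        ∀ i ≤ l, ∀ a b : Fin n, s i ≤ (a : ℕ) → (a : ℕ) < (b : ℕ) → (b : ℕ) < s (i + 1) →
          σ a < σ b) = blockIncreasingPerms n fun j => s (min j (l + 1)) := by
    ext σ
    simp only [Finset.mem_filter, Finset.mem_univ, true_and, mem_blockIncreasingPerms,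
      isBlockIncreasing_comp_min_iff hn, Nat.lt_succ_iff]
  have hprod : ∏ j ∈ Finset.Icc 1 (l + 1), qPochhammer Polynomial.X (s j - s (j - 1)) =
      ∏ j ∈ Finset.range (l + 1), qPochhammer (Polynomial.X : Polynomial ℚ)
        (s (min (j + 1) (l + 1)) - s (min j (l + 1))) := by
    rw [Finset.range_eq_Ico, ← Finset.Ico_add_one_right_eq_Icc,
      ← Finset.prod_Ico_add' _ 0 (l + 1) 1]
    refine Finset.prod_congr rfl fun j hj => ?_
    have hj := Finset.mem_Ico.mp hj
    rw [Nat.add_sub_cancel, min_eq_left (by omega : j ≤ l + 1),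
      min_eq_left (by omega : j + 1 ≤ l + 1)]
  have key := sum_pow_inversions_mul_prod_qPochhammer (n := n) (Polynomial.X : Polynomial ℚ)
    (l + 1) (monotone_comp_min fun i hi => (hmono i (Nat.lt_succ_iff.mp hi)).le)
    (by simp [h0]) (by simp [hn])
  rw [← hprod, ← hfilter] at key
  exact key
end

section
/- For l = 1 (the Grassmannian case), the combinatorial identity specializes as: Σ_{w} z^{Σ_{k≤s} ε^w_{k,(1,2]}} ∏_{k=1}^{s} (1 - t z^{ε^w_{k,(1,2]} + k - 1})^{-1} (1 - t z^{ε^w_{k,(1,2]} + k})^{-1} = [∏_{i=1}^n(1-z^i) / (∏_{i=1}^{s}(1-z^i) ∏_{i=1}^{n-s}(1-z^i))] · ∏_{i=1}^{s} (1 - t z^{i-1})^{-1} (1 - t z^{n-i+1})^{-1}, where w ranges over permutations of {1,...,n} increasing on {1,...,s} and on {s+1,...,n}, and ε^w_{k,(1,2]} = #{m : s < m ≤ n, w(k) < w(m)}. -/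
/-!
A Grassmannian shuffle `w` of `Fin (s + m)` is determined by its first block, and counting the
entries above `w k` gives `ε_k + w k = m + k` (0-based `k`). Hence `w ↦ ε` is a bijection onto
the antitone tuples `Fin s → [0, m]`, and the left side is a sum over such tuples. Splitting off
the first entry gives a recursion in `s`, which the closed form
`[s + m choose s]_z ∏_{i < s} (1 - t z^{r+i})⁻¹ (1 - t z^{r+m+1+i})⁻¹` satisfies by a
`t`-deformed `z`-Pascal rule; for `r = 0` this is the right side.
-/

/-- `ε^w_{k,m} = 1` if `w(k) < w(m)` (1-based indices in `{1,...,n}`), else `0`. -/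
def eps (n : ℕ) (w : Equiv.Perm (Fin n)) (k m : ℕ) : ℕ :=
  if h : k - 1 < n ∧ m - 1 < n then
    (if w ⟨k - 1, h.1⟩ < w ⟨m - 1, h.2⟩ then 1 else 0) else 0

/-- `ε^w_{k,(1,2]} = #{m : s < m ≤ n, w(k) < w(m)}`. -/
def epsG (n s : ℕ) (w : Equiv.Perm (Fin n)) (k : ℕ) : ℕ :=
  ∑ m ∈ Finset.Ioc s n, eps n w k m

open Finset

lemma Fin.antitone_cons {α : Type*} [Preorder α] {n : ℕ} {f : Fin n → α} {a : α} :
    Antitone (Fin.cons a f : Fin (n + 1) → α) ↔ (∀ j, f j ≤ a) ∧ Antitone f := by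
  simpa only [antitone_iff_forall_lt] using! Fin.liftFun_cons (α := α) (n := n) (· ≥ ·)

@[to_additive]
lemma prod_Icc_eq_prod_univ_fin {M : Type*} [CommMonoid M] (s : ℕ) (F : ℕ → M) :
    ∏ k ∈ Icc 1 s, F k = ∏ k : Fin s, F (k + 1) := by
  rw [Fin.prod_univ_eq_prod_range (fun k => F (k + 1)), ← Ico_add_one_right_eq_Icc,
    prod_Ico_eq_prod_range, add_tsub_cancel_right]
  simp only [add_comm]

section QBinomial

variable {R : Type*} [CommRing R] {q : R} {u : ℕ → R}

/-- The Gaussian binomial `∏_{i ≤ n} (1 - q^i) / (∏_{i ≤ k} (1 - q^i) ∏_{i ≤ n - k} (1 - q^i))`,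
where `u i` stands for `(1 - q^i)⁻¹`. -/
def qBinomial (q : R) (u : ℕ → R) (n k : ℕ) : R :=
  (∏ i ∈ Icc 1 n, (1 - q ^ i)) * (∏ i ∈ Icc 1 k, u i) * ∏ i ∈ Icc 1 (n - k), u i

lemma prod_one_sub_pow_mul_prod (hu : ∀ i, 1 ≤ i → (1 - q ^ i) * u i = 1) (n : ℕ) :
    (∏ i ∈ Icc 1 n, (1 - q ^ i)) * ∏ i ∈ Icc 1 n, u i = 1 := by
  rw [← prod_mul_distrib]
  exact prod_eq_one fun i hi => hu i (mem_Icc.1 hi).1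

lemma prod_Icc_succ_mul_one_sub_pow (hu : ∀ i, 1 ≤ i → (1 - q ^ i) * u i = 1) (k : ℕ) :
    (∏ i ∈ Icc 1 (k + 1), u i) * (1 - q ^ (k + 1)) = ∏ i ∈ Icc 1 k, u i := by
  rw [prod_Icc_succ_top (by omega), mul_assoc, mul_comm (u _), hu _ (by omega), mul_one]

lemma qBinomial_self (hu : ∀ i, 1 ≤ i → (1 - q ^ i) * u i = 1) (n : ℕ) :
    qBinomial q u n n = 1 := by
  simp [qBinomial, prod_one_sub_pow_mul_prod hu]

lemma qBinomial_zero_right (hu : ∀ i, 1 ≤ i → (1 - q ^ i) * u i = 1) (n : ℕ) :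
    qBinomial q u n 0 = 1 := by
  simp [qBinomial, prod_one_sub_pow_mul_prod hu]

/-- A combination of the two `q`-Pascal rules. -/
lemma qBinomial_twisted_pascal (hu : ∀ i, 1 ≤ i → (1 - q ^ i) * u i = 1) (k m : ℕ) (x : R) :
    qBinomial q u (k + m + 2) (k + 1) * (1 - x * q ^ (m + 1)) =
      qBinomial q u (k + m + 1) (k + 1) * (1 - x * q ^ (k + m + 2)) +
        q ^ (m + 1) * qBinomial q u (k + m + 1) k * (1 - x) := by
  set A := (∏ i ∈ Icc 1 (k + m + 1), (1 - q ^ i)) * (∏ i ∈ Icc 1 (k + 1), u i) *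
    ∏ i ∈ Icc 1 (m + 1), u i
  have h₂ : qBinomial q u (k + m + 2) (k + 1) = A * (1 - q ^ (k + m + 2)) := by
    rw [qBinomial, show k + m + 2 - (k + 1) = m + 1 by omega, prod_Icc_succ_top (by omega)]
    ring
  have h₁ : qBinomial q u (k + m + 1) (k + 1) = A * (1 - q ^ (m + 1)) := by
    rw [qBinomial, show k + m + 1 - (k + 1) = m by omega,
      ← prod_Icc_succ_mul_one_sub_pow hu m]
    ring
  have h₀ : qBinomial q u (k + m + 1) k = A * (1 - q ^ (k + 1)) := by
    rw [qBinomial, show k + m + 1 - k = m + 1 by omega, ← prod_Icc_succ_mul_one_sub_pow hu k]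
    ring
  rw [h₀, h₁, h₂]
  ring

end QBinomial

section AntitoneSum

variable {R : Type*} [CommRing R] {q t : R} {u d : ℕ → R}

lemma one_sub_mul_prod_Ico (hd : ∀ e, (1 - t * q ^ e) * d e = 1) {a b : ℕ} (hab : a < b) :
    (1 - t * q ^ a) * ∏ i ∈ Ico a b, d i = ∏ i ∈ Ico (a + 1) b, d i := by
  rw [prod_eq_prod_Ico_succ_bot hab, ← mul_assoc, hd, one_mul]

lemma prod_Ico_succ_mul_one_sub (hd : ∀ e, (1 - t * q ^ e) * d e = 1) {a b : ℕ} (hab : a ≤ b) :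
    (∏ i ∈ Ico a (b + 1), d i) * (1 - t * q ^ b) = ∏ i ∈ Ico a b, d i := by
  rw [prod_Ico_succ_top hab, mul_assoc, mul_comm (d b), hd, mul_one]

open Classical in
def antitoneTuples (s m : ℕ) : Finset (Fin s → ℕ) :=
  {f ∈ Fintype.piFinset fun _ => range (m + 1) | Antitone f}

lemma mem_antitoneTuples {s m : ℕ} {f : Fin s → ℕ} :
    f ∈ antitoneTuples s m ↔ (∀ k, f k ≤ m) ∧ Antitone f := by
  simp [antitoneTuples]

lemma cons_mem_antitoneTuples {s m j : ℕ} {g : Fin s → ℕ} :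
    Fin.cons j g ∈ antitoneTuples (s + 1) m ↔ j ≤ m ∧ g ∈ antitoneTuples s j := by
  simp only [mem_antitoneTuples, Fin.forall_fin_succ, Fin.cons_zero, Fin.cons_succ,
    Fin.antitone_cons]
  constructor
  · rintro ⟨⟨hj, -⟩, h, h'⟩
    exact ⟨hj, h, h'⟩
  · rintro ⟨hj, h, h'⟩
    exact ⟨⟨hj, fun k => (h k).trans hj⟩, h, h'⟩

def antitoneSum (q : R) (d : ℕ → R) (s m r : ℕ) : R :=
  ∑ f ∈ antitoneTuples s m, q ^ (∑ k, f k) * ∏ k : Fin s, d (f k + k + r) * d (f k + k + r + 1)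

lemma antitoneSum_zero (q : R) (d : ℕ → R) (m r : ℕ) : antitoneSum q d 0 m r = 1 := by
  have : antitoneTuples 0 m = {Fin.elim0} := by
    ext f
    simp [mem_antitoneTuples, Subsingleton.elim f Fin.elim0, Subsingleton.antitone]
  simp [antitoneSum, this]

lemma antitoneSum_succ (q : R) (d : ℕ → R) (s m r : ℕ) :
    antitoneSum q d (s + 1) m r =
      ∑ j ∈ range (m + 1), q ^ j * d (j + r) * d (j + r + 1) * antitoneSum q d s j (r + 1) := by
  simp only [antitoneSum, mul_sum]
  rw [sum_sigma']
  refine sum_nbij' (fun f => ⟨f 0, Fin.tail f⟩) (fun x => Fin.cons x.1 x.2) ?_ ?_ ?_ ?_ ?_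
  · intro f hf
    rw [← Fin.cons_self_tail f, cons_mem_antitoneTuples] at hf
    simpa [Nat.lt_succ_iff] using hf
  · rintro ⟨j, g⟩ h
    simpa [cons_mem_antitoneTuples, Nat.lt_succ_iff] using h
  · intro f _
    simp
  · rintro ⟨j, g⟩ _
    simp
  · intro f _
    simp only [Fin.sum_univ_succ, Fin.prod_univ_succ, Fin.tail, Fin.val_succ, Fin.val_zero,
      pow_add]
    ring_nf

def antitoneSumFormula (q : R) (u d : ℕ → R) (s m r : ℕ) : R :=
  qBinomial q u (s + m) s * (∏ i ∈ Ico r (r + s), d i) * ∏ i ∈ Ico (r + m + 1) (r + m + 1 + s), d i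

lemma antitoneSumFormula_zero_left (hu : ∀ i, 1 ≤ i → (1 - q ^ i) * u i = 1) (m r : ℕ) :
    antitoneSumFormula q u d 0 m r = 1 := by
  simp [antitoneSumFormula, qBinomial_zero_right hu]

lemma antitoneSumFormula_succ_zero (hu : ∀ i, 1 ≤ i → (1 - q ^ i) * u i = 1) (s r : ℕ) :
    antitoneSumFormula q u d (s + 1) 0 r =
      d r * d (r + 1) * antitoneSumFormula q u d s 0 (r + 1) := by
  simp only [antitoneSumFormula, add_zero, qBinomial_self hu, one_mul]
  rw [prod_eq_prod_Ico_succ_bot (show r < r + (s + 1) by omega),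
    prod_eq_prod_Ico_succ_bot (show r + 1 < r + 1 + (s + 1) by omega)]
  ring_nf

lemma antitoneSumFormula_succ_succ (hu : ∀ i, 1 ≤ i → (1 - q ^ i) * u i = 1)
    (hd : ∀ e, (1 - t * q ^ e) * d e = 1) (s M r : ℕ) :
    antitoneSumFormula q u d (s + 1) (M + 1) r = antitoneSumFormula q u d (s + 1) M r +
      q ^ (M + 1) * d (M + 1 + r) * d (M + 1 + r + 1) *
        antitoneSumFormula q u d s (M + 1) (r + 1) := by
  have key := qBinomial_twisted_pascal hu s M (t * q ^ r)
  have hL := one_sub_mul_prod_Ico hd (show r < r + (s + 1) by omega)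
  have hA := prod_Ico_succ_mul_one_sub hd (show r + M + 1 ≤ r + M + 1 + (s + 1) by omega)
  have hB := one_sub_mul_prod_Ico hd (show r + M + 1 < r + M + 1 + (s + 1) + 1 by omega)
  have hC : ∏ i ∈ Ico (r + M + 1) (r + M + 1 + (s + 1) + 1), d i =
      d (r + M + 1) * d (r + M + 2) * ∏ i ∈ Ico (r + M + 3) (r + M + 1 + (s + 1) + 1), d i := by
    rw [prod_eq_prod_Ico_succ_bot (by omega), prod_eq_prod_Ico_succ_bot (by omega), mul_assoc]
  simp only [antitoneSumFormula]
  -- factoring out `∏_{[r, r+s+1)} d` and `∏_{[r+M+1, r+M+s+3)} d` leaves the twisted Pascal rule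
  linear_combination (norm := ring_nf)
    ((∏ i ∈ Ico r (r + (s + 1)), d i) * ∏ i ∈ Ico (r + M + 1) (r + M + 1 + (s + 1) + 1), d i) * key
    - (qBinomial q u (s + M + 2) (s + 1) * ∏ i ∈ Ico r (r + (s + 1)), d i) * hB
    + (qBinomial q u (s + M + 1) (s + 1) * ∏ i ∈ Ico r (r + (s + 1)), d i) * hA
    + (q ^ (M + 1) * qBinomial q u (s + M + 1) s *
        ∏ i ∈ Ico (r + M + 1) (r + M + 1 + (s + 1) + 1), d i) * hL
    + (q ^ (M + 1) * qBinomial q u (s + M + 1) s * ∏ i ∈ Ico (r + 1) (r + (s + 1)), d i) * hC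

lemma sum_range_antitoneSumFormula (hu : ∀ i, 1 ≤ i → (1 - q ^ i) * u i = 1)
    (hd : ∀ e, (1 - t * q ^ e) * d e = 1) (s r M : ℕ) :
    ∑ j ∈ range (M + 1), q ^ j * d (j + r) * d (j + r + 1) * antitoneSumFormula q u d s j (r + 1) =
      antitoneSumFormula q u d (s + 1) M r := by
  induction M with
  | zero => simp [antitoneSumFormula_succ_zero hu]
  | succ M ih => rw [sum_range_succ, ih, antitoneSumFormula_succ_succ hu hd]

theorem antitoneSum_eq_formula (hu : ∀ i, 1 ≤ i → (1 - q ^ i) * u i = 1)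
    (hd : ∀ e, (1 - t * q ^ e) * d e = 1) (s m r : ℕ) :
    antitoneSum q d s m r = antitoneSumFormula q u d s m r := by
  induction s generalizing m r with
  | zero => rw [antitoneSum_zero, antitoneSumFormula_zero_left hu]
  | succ s ih => simp only [antitoneSum_succ, ih, sum_range_antitoneSumFormula hu hd]

end AntitoneSum

section Shuffle

variable {s m : ℕ}

def IsShuffle (w : Equiv.Perm (Fin (s + m))) : Prop :=
  StrictMono (fun i : Fin s => w (Fin.castAdd m i)) ∧
    StrictMono (fun j : Fin m => w (Fin.natAdd s j))

lemma isShuffle_iff {w : Equiv.Perm (Fin (s + m))} :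
    IsShuffle w ↔ ∀ a b : Fin (s + m), (a : ℕ) < b → ((b : ℕ) < s ∨ s ≤ (a : ℕ)) → w a < w b := by
  refine ⟨fun ⟨h₁, h₂⟩ a b hab hab' => ?_, fun h =>
    ⟨fun i j hij => h _ _ hij (by simp), fun i j hij => h _ _ (by simpa using hij) (by simp)⟩⟩
  induction a using Fin.addCases <;> induction b using Fin.addCases <;>
    simp only [Fin.val_castAdd, Fin.val_natAdd] at hab hab'
  · exact h₁ hab
  · omega
  · omega
  · exact h₂ (by simpa using hab)

lemma epsG_castAdd_succ (w : Equiv.Perm (Fin (s + m))) (k : Fin s) :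
    epsG (s + m) s w (k + 1) =
      ∑ j : Fin m, if w (Fin.castAdd m k) < w (Fin.natAdd s j) then 1 else 0 := by
  rw [epsG, ← Ico_add_one_add_one_eq_Ioc, sum_Ico_eq_sum_range,
    show s + m + 1 - (s + 1) = m by omega, ← Fin.sum_univ_eq_sum_range]
  refine sum_congr rfl fun j _ => ?_
  rw [eps, dif_pos (by omega)]
  congr 3
  exact Fin.ext (by simp; omega)

lemma sum_ite_lt_eq {N : ℕ} (a : Fin N) :
    ∑ x : Fin N, (if a < x then 1 else 0) = N - 1 - a := by
  rw [sum_boole, filter_lt_eq_Ioi, Fin.card_Ioi, Nat.cast_id]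

/-- Of the `s + m - 1 - w k` values above `w k`, `s - 1 - k` are taken on the first block and
`ε_k` on the second. -/
lemma IsShuffle.epsG_add {w : Equiv.Perm (Fin (s + m))} (hw : IsShuffle w) (k : Fin s) :
    epsG (s + m) s w (k + 1) + w (Fin.castAdd m k) = m + k := by
  set a := w (Fin.castAdd m k)
  have htotal := sum_ite_lt_eq a
  rw [← Equiv.sum_comp w, Fin.sum_univ_add, ← epsG_castAdd_succ] at htotal
  have hfirst : ∑ i : Fin s, (if a < w (Fin.castAdd m i) then 1 else 0) = s - 1 - k := by
    simp only [a, hw.1.lt_iff_lt, sum_ite_lt_eq]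
  have ha := a.2
  omega

lemma epsG_castAdd_succ_le (w : Equiv.Perm (Fin (s + m))) (k : Fin s) :
    epsG (s + m) s w (k + 1) ≤ m := by
  rw [epsG_castAdd_succ, sum_boole, Nat.cast_id]
  exact (card_filter_le _ _).trans_eq (by simp)

lemma IsShuffle.antitone_epsG {w : Equiv.Perm (Fin (s + m))} (hw : IsShuffle w) :
    Antitone fun k : Fin s => epsG (s + m) s w (k + 1) := by
  intro i j hij
  simp only [epsG_castAdd_succ]
  refine sum_le_sum fun x _ => ?_
  have := hw.1.monotone hij
  split_ifs with h₁ h₂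
  · exact le_rfl
  · exact absurd (this.trans_lt h₁) h₂
  · exact zero_le_one
  · exact le_rfl

lemma card_image_univ_of_strictMono {g : Fin s → Fin (s + m)} (hg : StrictMono g) :
    #(univ.image g) = s := by
  rw [card_image_of_injective _ hg.injective, card_univ, Fintype.card_fin]

lemma card_compl_image_univ_of_strictMono {g : Fin s → Fin (s + m)} (hg : StrictMono g) :
    #(univ.image g)ᶜ = m := by
  rw [card_compl, Fintype.card_fin, card_image_univ_of_strictMono hg, Nat.add_sub_cancel_left]

def shuffleOfStrictMono (g : Fin s → Fin (s + m)) (hg : StrictMono g) : Equiv.Perm (Fin (s + m)) :=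
  finSumFinEquiv.symm.trans
    (finSumEquivOfFinset (card_image_univ_of_strictMono hg)
      (card_compl_image_univ_of_strictMono hg))

lemma shuffleOfStrictMono_castAdd {g : Fin s → Fin (s + m)} (hg : StrictMono g) (i : Fin s) :
    shuffleOfStrictMono g hg (Fin.castAdd m i) = g i := by
  have := orderEmbOfFin_unique (card_image_univ_of_strictMono hg)
    (fun x => mem_image_of_mem g (mem_univ x)) hg
  simp [shuffleOfStrictMono, ← this]

lemma isShuffle_shuffleOfStrictMono {g : Fin s → Fin (s + m)} (hg : StrictMono g) :
    IsShuffle (shuffleOfStrictMono g hg) := by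
  refine ⟨by simpa only [shuffleOfStrictMono_castAdd] using hg, ?_⟩
  simpa [shuffleOfStrictMono] using (orderEmbOfFin _ _).strictMono

lemma IsShuffle.natAdd_eq {w : Equiv.Perm (Fin (s + m))} (hw : IsShuffle w) (j : Fin m) :
    w (Fin.natAdd s j) = (univ.image fun i => w (Fin.castAdd m i))ᶜ.orderEmbOfFin
      (card_compl_image_univ_of_strictMono hw.1) j := by
  refine congrFun (orderEmbOfFin_unique _ (fun j => ?_) hw.2) j
  simp only [mem_compl, mem_image, mem_univ, true_and, not_exists]
  intro i h
  have := congrArg Fin.val (w.injective h)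
  simp only [Fin.val_castAdd, Fin.val_natAdd] at this
  omega

lemma IsShuffle.ext {w w' : Equiv.Perm (Fin (s + m))} (hw : IsShuffle w) (hw' : IsShuffle w')
    (h : ∀ i, w (Fin.castAdd m i) = w' (Fin.castAdd m i)) : w = w' := by
  ext x : 1
  induction x using Fin.addCases with
  | left i => exact h i
  | right j =>
    rw [hw.natAdd_eq, hw'.natAdd_eq]
    simp only [h]

open Classical in
theorem sum_isShuffle_eq_sum_antitoneTuples {M : Type*} [AddCommMonoid M]
    (F : (Fin s → ℕ) → M) :
    ∑ w ∈ univ.filter (IsShuffle (s := s) (m := m)), F (fun k => epsG (s + m) s w (k + 1)) =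
      ∑ f ∈ antitoneTuples s m, F f := by
  refine sum_bij (fun w _ k => epsG (s + m) s w (k + 1)) ?_ ?_ ?_ (fun _ _ => rfl)
  · intro w hw
    exact mem_antitoneTuples.2 ⟨epsG_castAdd_succ_le w, (mem_filter.1 hw).2.antitone_epsG⟩
  · intro w₁ hw₁ w₂ hw₂ h
    replace hw₁ := (mem_filter.1 hw₁).2
    replace hw₂ := (mem_filter.1 hw₂).2
    refine hw₁.ext hw₂ fun i => Fin.ext ?_
    have h₁ := hw₁.epsG_add i
    have h₂ := hw₂.epsG_add i
    have := congrFun h i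
    omega
  · intro f hf
    obtain ⟨hfm, hf⟩ := mem_antitoneTuples.1 hf
    let g : Fin s → Fin (s + m) := fun k => ⟨k + (m - f k), by omega⟩
    have hg : StrictMono g := fun i j hij => by
      have := hf hij.le
      have := hfm i
      simp only [g, Fin.mk_lt_mk]
      omega
    refine ⟨shuffleOfStrictMono g hg,
      mem_filter.2 ⟨mem_univ _, isShuffle_shuffleOfStrictMono hg⟩, funext fun k => ?_⟩
    have := (isShuffle_shuffleOfStrictMono hg).epsG_add k
    rw [shuffleOfStrictMono_castAdd] at this
    have := hfm k
    simp only [g] at *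
    omega

end Shuffle

section Identity

variable {R : Type*} [CommRing R] {q t : R} {u d : ℕ → R}

theorem sum_shuffles_eq (hu : ∀ i, 1 ≤ i → (1 - q ^ i) * u i = 1)
    (hd : ∀ e, (1 - t * q ^ e) * d e = 1) (s m : ℕ) :
    ∑ w ∈ univ.filter (fun w : Equiv.Perm (Fin (s + m)) => ∀ a b : Fin (s + m),
        (a : ℕ) < (b : ℕ) → (((b : ℕ) < s) ∨ (s ≤ (a : ℕ))) → w a < w b),
      q ^ (∑ k ∈ Icc 1 s, epsG (s + m) s w k) *
        ∏ k ∈ Icc 1 s, (d (epsG (s + m) s w k + k - 1) * d (epsG (s + m) s w k + k)) =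
    (∏ i ∈ Icc 1 (s + m), (1 - q ^ i)) * (∏ i ∈ Icc 1 s, u i) * (∏ i ∈ Icc 1 m, u i) *
      ∏ i ∈ Icc 1 s, (d (i - 1) * d (s + m - i + 1)) := by
  classical
  have hlow : ∏ i ∈ Icc 1 s, d (i - 1) = ∏ i ∈ Ico 0 (0 + s), d i := by
    rw [prod_Icc_eq_prod_univ_fin, zero_add, prod_Ico_eq_prod_range, ← Fin.prod_univ_eq_prod_range]
    simp
  have hhigh : ∏ i ∈ Icc 1 s, d (s + m - i + 1) = ∏ i ∈ Ico (0 + m + 1) (0 + m + 1 + s), d i := by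
    refine prod_nbij' (fun i => s + m + 1 - i) (fun i => s + m + 1 - i) ?_ ?_ ?_ ?_ ?_
    all_goals intro i hi; simp only [mem_Icc, mem_Ico] at hi ⊢
    any_goals omega
    rw [show s + m - i + 1 = s + m + 1 - i by omega]
  calc _ = ∑ w ∈ univ.filter IsShuffle, q ^ (∑ k : Fin s, epsG (s + m) s w (k + 1)) *
          ∏ k : Fin s,
            d (epsG (s + m) s w (k + 1) + k + 0) * d (epsG (s + m) s w (k + 1) + k + 0 + 1) := by
        rw [filter_congr fun w _ => isShuffle_iff.symm]
        refine sum_congr rfl fun w _ => ?_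
        simp only [sum_Icc_eq_sum_univ_fin, prod_Icc_eq_prod_univ_fin, ← add_assoc,
          Nat.add_sub_cancel, add_zero]
    _ = antitoneSum q d s m 0 := sum_isShuffle_eq_sum_antitoneTuples
      fun f => q ^ (∑ k, f k) * ∏ k : Fin s, d (f k + k + 0) * d (f k + k + 0 + 1)
    _ = antitoneSumFormula q u d s m 0 := antitoneSum_eq_formula hu hd s m 0
    _ = _ := by
      rw [antitoneSumFormula, qBinomial, prod_mul_distrib, hlow, hhigh, Nat.add_sub_cancel_left]
      ring

end Identity

theorem stmt8_general (n s : ℕ) (hsn : s < n) :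
    (∑ w ∈ Finset.univ.filter (fun w : Equiv.Perm (Fin n) =>
        ∀ a b : Fin n, (a : ℕ) < (b : ℕ) →
          (((b : ℕ) < s) ∨ (s ≤ (a : ℕ))) → w a < w b),
      (MvPowerSeries.X 1 : MvPowerSeries (Fin 2) ℚ) ^ (∑ k ∈ Finset.Icc 1 s, epsG n s w k) *
        ∏ k ∈ Finset.Icc 1 s,
          ((1 - MvPowerSeries.X 0 * MvPowerSeries.X 1 ^ (epsG n s w k + k - 1))⁻¹ *
           (1 - MvPowerSeries.X 0 * MvPowerSeries.X 1 ^ (epsG n s w k + k))⁻¹)) =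
    (∏ i ∈ Finset.Icc 1 n, (1 - (MvPowerSeries.X 1 : MvPowerSeries (Fin 2) ℚ) ^ i)) *
      (∏ i ∈ Finset.Icc 1 s, (1 - (MvPowerSeries.X 1 : MvPowerSeries (Fin 2) ℚ) ^ i)⁻¹) *
      (∏ i ∈ Finset.Icc 1 (n - s), (1 - (MvPowerSeries.X 1 : MvPowerSeries (Fin 2) ℚ) ^ i)⁻¹) *
      ∏ i ∈ Finset.Icc 1 s,
        ((1 - MvPowerSeries.X 0 * (MvPowerSeries.X 1 : MvPowerSeries (Fin 2) ℚ) ^ (i - 1))⁻¹ *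
         (1 - MvPowerSeries.X 0 * (MvPowerSeries.X 1 : MvPowerSeries (Fin 2) ℚ) ^ (n - i + 1))⁻¹) := by
  obtain ⟨m, rfl⟩ := Nat.exists_eq_add_of_le hsn.le
  rw [Nat.add_sub_cancel_left]
  refine sum_shuffles_eq (q := MvPowerSeries.X 1) (t := MvPowerSeries.X 0)
    (u := fun i => (1 - MvPowerSeries.X 1 ^ i)⁻¹)
    (d := fun e => (1 - MvPowerSeries.X 0 * MvPowerSeries.X 1 ^ e)⁻¹)
    (fun i hi => MvPowerSeries.mul_inv_cancel _ ?_) (fun e => MvPowerSeries.mul_inv_cancel _ ?_) s m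
  · simp [zero_pow (Nat.one_le_iff_ne_zero.1 hi)]
  · simp

/-- The `l = 1` (Grassmannian) case of the combinatorial identity, summing over
Grassmannian shuffles (permutations increasing on `{1,...,s}` and `{s+1,...,n}`).
Here `t = X 0` and `z = X 1`, formal power series over `ℚ`. -/
theorem stmt8 (n s : ℕ) (hs : 1 ≤ s) (hsn : s < n) :
    (∑ w ∈ Finset.univ.filter (fun w : Equiv.Perm (Fin n) =>
        ∀ a b : Fin n, (a : ℕ) < (b : ℕ) →
          (((b : ℕ) < s) ∨ (s ≤ (a : ℕ))) → w a < w b),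
      (MvPowerSeries.X 1 : MvPowerSeries (Fin 2) ℚ) ^ (∑ k ∈ Finset.Icc 1 s, epsG n s w k) *
        ∏ k ∈ Finset.Icc 1 s,
          ((1 - MvPowerSeries.X 0 * MvPowerSeries.X 1 ^ (epsG n s w k + k - 1))⁻¹ *
           (1 - MvPowerSeries.X 0 * MvPowerSeries.X 1 ^ (epsG n s w k + k))⁻¹)) =
    (∏ i ∈ Finset.Icc 1 n, (1 - (MvPowerSeries.X 1 : MvPowerSeries (Fin 2) ℚ) ^ i)) *
      (∏ i ∈ Finset.Icc 1 s, (1 - (MvPowerSeries.X 1 : MvPowerSeries (Fin 2) ℚ) ^ i)⁻¹) *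
      (∏ i ∈ Finset.Icc 1 (n - s), (1 - (MvPowerSeries.X 1 : MvPowerSeries (Fin 2) ℚ) ^ i)⁻¹) *
      ∏ i ∈ Finset.Icc 1 s,
        ((1 - MvPowerSeries.X 0 * (MvPowerSeries.X 1 : MvPowerSeries (Fin 2) ℚ) ^ (i - 1))⁻¹ *
         (1 - MvPowerSeries.X 0 * (MvPowerSeries.X 1 : MvPowerSeries (Fin 2) ℚ) ^ (n - i + 1))⁻¹) :=
  stmt8_general n s hsn
end

section
/- For the complete flag case (l = n-1, s_i = i), the identity of Lemma pfpoly reads: (1 - z^n) ∏_{1≤i≤j≤n-1} (x_{i-1} - x_j z^{j-i+1}) = Σ_{m=1}^{n} z^{n-m}(1-z) ∏_{i≤m-1}(x_{i-1} - x_{m-1} z^{m-i+1}) ∏_{m≤j≤n-1}(x_{m-1} - x_j z^{j-m}) ∏_{i≤j, i≠m, j≠m-1}(x_{i-1} - x_j z^{j-i+1}) in C[x_0,...,x_{n-1},z]. -/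
open Polynomial

/-- `e^{i,j}_k = x_i - x_j z^k` in `ℂ[x_0, x_1, ...][z]`. -/
noncomputable def ee (i j k : ℕ) : Polynomial (MvPolynomial ℕ ℂ) :=
  Polynomial.C (MvPolynomial.X i) - Polynomial.C (MvPolynomial.X j) * Polynomial.X ^ k

/-!
Substituting `w i = x_{i-1} z^i`, each factor `x_{i-1} - x_j z^{j-i+1}` becomes
`z^{-i} (w_i - w_{j+1})`. After clearing powers of `z`, the left side is `1 - z^n` times the
Vandermonde product of `w_1, …, w_n`, and the `m`-th summand on the right is `1 - z` times the
same product with `w_m` replaced by `z w_m` in every factor containing it. Dividing by the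
Vandermonde product leaves `1 - z^n = (1 - z) ∑_m ∏_{i ≠ m} (z w_m - w_i) / (w_m - w_i)`, which is
Lagrange's formula for the leading coefficient `z^n` of `∏_i (z t - w_i)`, interpolated at the
nodes `0, w_1, …, w_n`.
-/

open Finset

theorem one_sub_mul_sum_prod_div_sub {K ι : Type*} [Field K] [DecidableEq ι] (s : Finset ι)
    {v : ι → K} (hv : Set.InjOn v s) (hv0 : ∀ i ∈ s, v i ≠ 0) (z : K) :
    (1 - z) * ∑ m ∈ s, ∏ i ∈ s.erase m, (z * v m - v i) / (v m - v i) = 1 - z ^ #s := by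
  set u : Option ι → K := fun o => o.elim 0 v
  have hu : Set.InjOn u (insertNone s) := by
    rintro (_ | i) hi (_ | j) hj h
    · rfl
    · exact absurd h.symm (hv0 j (some_mem_insertNone.mp hj))
    · exact absurd h (hv0 i (some_mem_insertNone.mp hi))
    · exact congrArg some (hv (some_mem_insertNone.mp hi) (some_mem_insertNone.mp hj) h)
  set P : K[X] := ∏ i ∈ s, (C z * X - C (v i))
  have hlin : ∀ i ∈ s, (C z * X - C (v i)).natDegree ≤ 1 := fun i _ => by compute_degree
  have hdeg : P.degree < #(insertNone s) := by
    rw [card_insertNone]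
    refine (degree_le_natDegree).trans_lt ?_
    have : P.natDegree ≤ #s := (natDegree_prod_le _ _).trans <| by
      simpa using sum_le_card_nsmul s _ 1 hlin
    exact_mod_cast Nat.lt_succ_of_le this
  have hcoeff : P.coeff #s = z ^ #s := by
    simpa using coeff_prod_of_natDegree_le s (fun i => C z * X - C (v i)) 1 hlin
  have key := Lagrange.coeff_eq_sum hu hdeg
  have herase_none : (insertNone s).erase none = s.map Function.Embedding.some := by
    ext (_ | i) <;> simp
  have herase_some : ∀ m, (insertNone s).erase (some m) = insertNone (s.erase m) := by
    intro m; ext (_ | i) <;> simp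
  rw [card_insertNone, add_tsub_cancel_right, hcoeff, sum_insertNone, herase_none, prod_map] at key
  have hnone : eval (u none) P / ∏ i ∈ s, (u none - u (Function.Embedding.some i)) = 1 := by
    rw [div_eq_one_iff_eq (prod_ne_zero_iff.mpr fun i hi => by simpa [u] using hv0 i hi)]
    simp [P, u, eval_prod]
  have hsome : ∀ m ∈ s,
      eval (u (some m)) P / ∏ j ∈ (insertNone s).erase (some m), (u (some m) - u j) =
        (z - 1) * ∏ i ∈ s.erase m, (z * v m - v i) / (v m - v i) := by
    intro m hm
    rw [herase_some, prod_insertNone, prod_div_distrib]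
    simp only [u, P, eval_prod, eval_sub, eval_mul, eval_C, eval_X, Option.elim, sub_zero]
    rw [← mul_prod_erase s _ hm]
    field_simp [hv0 m hm]
  rw [hnone, sum_congr rfl hsome, ← mul_sum] at key
  linear_combination key

theorem prod_pairsSet_eq {M : Type*} [CommMonoid M] (f : ℕ × ℕ → M) {l m : ℕ} (hm : 1 ≤ m)
    (hml : m ≤ l + 1) :
    ∏ p ∈ pairsSet l, f p = (∏ i ∈ Icc 1 (m - 1), f (i, m - 1)) * (∏ j ∈ Icc m l, f (m, j)) *
      ∏ p ∈ (pairsSet l).filter (fun p => p.1 ≠ m ∧ p.2 ≠ m - 1), f p := by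
  have hcol : (pairsSet l).filter (fun p => p.2 = m - 1) = (Icc 1 (m - 1)).image (·, m - 1) := by
    ext ⟨i, j⟩
    simp only [pairsSet, mem_filter, mem_product, mem_Icc, mem_image, Prod.mk.injEq, existsAndEq,
      true_and]
    omega
  have hrow : ((pairsSet l).filter (fun p => ¬p.2 = m - 1)).filter (fun p => p.1 = m) =
      (Icc m l).image (m, ·) := by
    ext ⟨i, j⟩
    simp only [pairsSet, mem_filter, mem_product, mem_Icc, mem_image, Prod.mk.injEq,
      exists_eq_right_right]
    omega
  rw [← prod_filter_mul_prod_filter_not (pairsSet l) (fun p => p.2 = m - 1),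
    ← prod_filter_mul_prod_filter_not ((pairsSet l).filter fun p => ¬p.2 = m - 1)
      (fun p => p.1 = m), hrow, filter_filter, hcol,
    prod_image (by simp), prod_image (by simp), mul_assoc]
  congr 3
  ext p; simp only [and_comm, ne_eq]

theorem prod_Icc_erase_eq {M : Type*} [CommMonoid M] (f : ℕ → M) {m n : ℕ} (hm : 1 ≤ m)
    (hmn : m ≤ n) :
    ∏ i ∈ (Icc 1 n).erase m, f i = (∏ i ∈ Icc 1 (m - 1), f i) * ∏ j ∈ Icc m (n - 1), f (j + 1) := by
  have hsplit : (Icc 1 n).erase m = Icc 1 (m - 1) ∪ (Icc m (n - 1)).image (· + 1) := by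
    ext i
    simp only [mem_erase, mem_union, mem_Icc, image_add_right_Icc]
    omega
  have hdisj : Disjoint (Icc 1 (m - 1)) ((Icc m (n - 1)).image (· + 1)) := by
    rw [image_add_right_Icc, disjoint_left]
    intro i h1 h2
    simp only [mem_Icc] at h1 h2
    omega
  rw [hsplit, prod_union hdisj, prod_image (by simp)]

theorem one_sub_pow_mul_prod_pairsSet {K : Type*} [Field K] (n : ℕ) {w : ℕ → K}
    (hw : Set.InjOn w (Icc 1 n)) (hw0 : ∀ i ∈ Icc 1 n, w i ≠ 0) (z : K) :
    (1 - z ^ n) * ∏ p ∈ pairsSet (n - 1), (w p.1 - w (p.2 + 1)) =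
      ∑ m ∈ Icc 1 n, (1 - z) * (∏ i ∈ Icc 1 (m - 1), (w i - z * w m)) *
        (∏ j ∈ Icc m (n - 1), (z * w m - w (j + 1))) *
        ∏ p ∈ (pairsSet (n - 1)).filter (fun p => p.1 ≠ m ∧ p.2 ≠ m - 1),
          (w p.1 - w (p.2 + 1)) := by
  have hA := one_sub_mul_sum_prod_div_sub (Icc 1 n) hw hw0 z
  rw [Nat.card_Icc, Nat.add_sub_cancel] at hA
  rw [← hA, mul_assoc, sum_mul, mul_sum]
  refine sum_congr rfl fun m hm => ?_
  obtain ⟨hm1, hmn⟩ := mem_Icc.mp hm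
  have hne : ∀ i ∈ Icc 1 n, i ≠ m → w m - w i ≠ 0 := fun i hi him =>
    sub_ne_zero.mpr fun h => him (hw hi hm h.symm)
  have hleft : ∏ i ∈ Icc 1 (m - 1), (z * w m - w i) / (w m - w i) * (w i - w m) =
      ∏ i ∈ Icc 1 (m - 1), (w i - z * w m) := by
    refine prod_congr rfl fun i hi => ?_
    have := hne i (by simp only [mem_Icc] at hi ⊢; omega) (by simp only [mem_Icc] at hi; omega)
    field_simp
    ring
  have hright : ∏ j ∈ Icc m (n - 1), (z * w m - w (j + 1)) / (w m - w (j + 1)) * (w m - w (j + 1)) =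
      ∏ j ∈ Icc m (n - 1), (z * w m - w (j + 1)) := by
    refine prod_congr rfl fun j hj => ?_
    simp only [mem_Icc] at hj
    exact div_mul_cancel₀ _ (hne (j + 1) (mem_Icc.mpr (by omega)) (by omega))
  rw [prod_pairsSet_eq _ hm1 (by omega), prod_Icc_erase_eq _ hm1 hmn]
  simp only [Nat.sub_add_cancel hm1]
  rw [← hleft, ← hright, prod_mul_distrib, prod_mul_distrib]
  ring

theorem one_sub_pow_mul_prod_pairsSet_of_isDomain {R : Type*} [CommRing R] [IsDomain R] (n : ℕ)
    {w : ℕ → R} (hw : Set.InjOn w (Icc 1 n)) (hw0 : ∀ i ∈ Icc 1 n, w i ≠ 0) (z : R) :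
    (1 - z ^ n) * ∏ p ∈ pairsSet (n - 1), (w p.1 - w (p.2 + 1)) =
      ∑ m ∈ Icc 1 n, (1 - z) * (∏ i ∈ Icc 1 (m - 1), (w i - z * w m)) *
        (∏ j ∈ Icc m (n - 1), (z * w m - w (j + 1))) *
        ∏ p ∈ (pairsSet (n - 1)).filter (fun p => p.1 ≠ m ∧ p.2 ≠ m - 1),
          (w p.1 - w (p.2 + 1)) := by
  have hφ := IsFractionRing.injective R (FractionRing R)
  apply hφ
  simpa using one_sub_pow_mul_prod_pairsSet n (hφ.comp_injOn hw)
    (fun i hi => (map_ne_zero_iff _ hφ).mpr (hw0 i hi)) (algebraMap R (FractionRing R) z)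

noncomputable def scaledVar (i : ℕ) : Polynomial (MvPolynomial ℕ ℂ) :=
  C (MvPolynomial.X (i - 1)) * X ^ i

theorem scaledVar_injective : Function.Injective scaledVar := fun i j h => by
  simpa only [scaledVar, natDegree_C_mul_X_pow _ _ (MvPolynomial.X_ne_zero _)] using
    congrArg natDegree h

theorem scaledVar_ne_zero (i : ℕ) : scaledVar i ≠ 0 :=
  mul_ne_zero (C_ne_zero.mpr (MvPolynomial.X_ne_zero _)) (pow_ne_zero _ X_ne_zero)

theorem X_pow_mul_ee (a b k c : ℕ) :
    X ^ c * ee a b k = C (MvPolynomial.X a) * X ^ c - C (MvPolynomial.X b) * X ^ (k + c) := by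
  rw [ee, pow_add]; ring

theorem X_pow_mul_ee_pair {i j : ℕ} (hij : i ≤ j) :
    X ^ i * ee (i - 1) j (j - i + 1) = scaledVar i - scaledVar (j + 1) := by
  rw [X_pow_mul_ee, scaledVar, scaledVar, Nat.add_sub_cancel, show j - i + 1 + i = j + 1 by omega]

theorem X_pow_sum_mul_prod_ee {l : ℕ} {s : Finset (ℕ × ℕ)} (hs : s ⊆ pairsSet l) :
    X ^ (∑ p ∈ s, p.1) * ∏ p ∈ s, ee (p.1 - 1) p.2 (p.2 - p.1 + 1) =
      ∏ p ∈ s, (scaledVar p.1 - scaledVar (p.2 + 1)) := by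
  rw [← prod_pow_eq_pow_sum, ← prod_mul_distrib]
  exact prod_congr rfl fun p hp => X_pow_mul_ee_pair (mem_filter.mp (hs hp)).2

theorem X_pow_sum_mul_summand {n m : ℕ} (hm1 : 1 ≤ m) (hmn : m ≤ n) :
    X ^ (∑ p ∈ pairsSet (n - 1), p.1) *
      (X ^ (n - m) * (1 - X) * (∏ i ∈ Icc 1 (m - 1), ee (i - 1) (m - 1) (m - i + 1)) *
        (∏ j ∈ Icc m (n - 1), ee (m - 1) j (j - m)) *
        ∏ p ∈ (pairsSet (n - 1)).filter (fun p => p.1 ≠ m ∧ p.2 ≠ m - 1),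
          ee (p.1 - 1) p.2 (p.2 - p.1 + 1)) =
    (1 - X) * (∏ i ∈ Icc 1 (m - 1), (scaledVar i - X * scaledVar m)) *
      (∏ j ∈ Icc m (n - 1), (X * scaledVar m - scaledVar (j + 1))) *
      ∏ p ∈ (pairsSet (n - 1)).filter (fun p => p.1 ≠ m ∧ p.2 ≠ m - 1),
        (scaledVar p.1 - scaledVar (p.2 + 1)) := by
  have hcol : ∏ i ∈ Icc 1 (m - 1), X ^ i * ee (i - 1) (m - 1) (m - i + 1) =
      ∏ i ∈ Icc 1 (m - 1), (scaledVar i - X * scaledVar m) := by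
    refine prod_congr rfl fun i hi => ?_
    rw [X_pow_mul_ee, scaledVar, scaledVar,
      show m - i + 1 + i = m + 1 by simp only [mem_Icc] at hi; omega]
    ring
  have hrow : X ^ (n - m) * ∏ j ∈ Icc m (n - 1), X ^ m * ee (m - 1) j (j - m) =
      ∏ j ∈ Icc m (n - 1), (X * scaledVar m - scaledVar (j + 1)) := by
    have hcard : #(Icc m (n - 1)) = n - m := by rw [Nat.card_Icc]; omega
    rw [← hcard, ← prod_const, ← prod_mul_distrib]
    refine prod_congr rfl fun j hj => ?_
    rw [← mul_assoc, ← pow_succ', X_pow_mul_ee, scaledVar, scaledVar, Nat.add_sub_cancel,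
      show j - m + (m + 1) = j + 1 by simp only [mem_Icc] at hj; omega]
    ring
  have hfilter := X_pow_sum_mul_prod_ee (filter_subset
    (fun p : ℕ × ℕ => p.1 ≠ m ∧ p.2 ≠ m - 1) (pairsSet (n - 1)))
  rw [← prod_pow_eq_pow_sum, prod_pairsSet_eq _ hm1 (by omega), prod_pow_eq_pow_sum _ Prod.fst,
    ← hcol, ← hrow, ← hfilter, prod_mul_distrib, prod_mul_distrib]
  ring

theorem stmt12_general (n : ℕ) :
    (1 - (Polynomial.X : Polynomial (MvPolynomial ℕ ℂ)) ^ n) *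
      ∏ p ∈ pairsSet (n - 1), ee (p.1 - 1) p.2 (p.2 - p.1 + 1) =
    ∑ m ∈ Finset.Icc 1 n,
      (Polynomial.X : Polynomial (MvPolynomial ℕ ℂ)) ^ (n - m) *
        (1 - (Polynomial.X : Polynomial (MvPolynomial ℕ ℂ))) *
        (∏ i ∈ Finset.Icc 1 (m - 1), ee (i - 1) (m - 1) (m - i + 1)) *
        (∏ j ∈ Finset.Icc m (n - 1), ee (m - 1) j (j - m)) *
        (∏ p ∈ (pairsSet (n - 1)).filter (fun p => p.1 ≠ m ∧ p.2 ≠ m - 1),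
          ee (p.1 - 1) p.2 (p.2 - p.1 + 1)) := by
  refine mul_left_cancel₀ (pow_ne_zero (∑ p ∈ pairsSet (n - 1), p.1) X_ne_zero) ?_
  rw [mul_left_comm, X_pow_sum_mul_prod_ee subset_rfl, mul_sum,
    sum_congr rfl fun m hm => X_pow_sum_mul_summand (mem_Icc.mp hm).1 (mem_Icc.mp hm).2]
  exact one_sub_pow_mul_prod_pairsSet_of_isDomain n scaledVar_injective.injOn
    (fun i _ => scaledVar_ne_zero i) X

/-- Lemma pfpoly for complete flags (`l = n-1`, `s i = i`):
`(1-z^n) ∏_{1≤i≤j≤n-1} (x_{i-1} - x_j z^{j-i+1}) = Σ_{m=1}^{n} z^{n-m}(1-z)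
∏_{i≤m-1}(x_{i-1} - x_{m-1} z^{m-i+1}) ∏_{m≤j≤n-1}(x_{m-1} - x_j z^{j-m})
∏_{i≤j, i≠m, j≠m-1}(x_{i-1} - x_j z^{j-i+1})`. -/
theorem stmt12 (n : ℕ) (hn : 1 ≤ n) :
    (1 - (Polynomial.X : Polynomial (MvPolynomial ℕ ℂ)) ^ n) *
      ∏ p ∈ pairsSet (n - 1), ee (p.1 - 1) p.2 (p.2 - p.1 + 1) =
    ∑ m ∈ Finset.Icc 1 n,
      (Polynomial.X : Polynomial (MvPolynomial ℕ ℂ)) ^ (n - m) *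
        (1 - (Polynomial.X : Polynomial (MvPolynomial ℕ ℂ))) *
        (∏ i ∈ Finset.Icc 1 (m - 1), ee (i - 1) (m - 1) (m - i + 1)) *
        (∏ j ∈ Finset.Icc m (n - 1), ee (m - 1) j (j - m)) *
        (∏ p ∈ (pairsSet (n - 1)).filter (fun p => p.1 ≠ m ∧ p.2 ≠ m - 1),
          ee (p.1 - 1) p.2 (p.2 - p.1 + 1)) :=
  stmt12_general n
end

section
/- The Euler characteristic generating function for Quot schemes of P^1: Σ_{d≥0} χ(Quot_d(O^n → rank r quotients)) t^d = C(n, r) · (1-t)^{-2(n-r)}, i.e. χ(HQ_d(G^r(n))) = C(n,r) · Σ_{e=0}^{d} C(e + n - r - 1, n - r - 1) C(d - e + n - r - 1, n - r - 1). -/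
/-!
A strictly increasing `c` is the same as an `s`-subset of `{1, …, n}`, so a fixed-point datum is
a pair `(a, b)` of `ℕ`-valued sequences of total weight `d` together with such a subset. Stars and
bars counts the pairs `(a, b)` as `C(2s + d - 1, d)`, which is the `t^d`-coefficient of
`(1 - t)^{-2s}`; the convolution form comes from `(1 - t)^{-2s} = (1 - t)^{-s} · (1 - t)^{-s}`.
-/

open PowerSeries Finset

namespace PowerSeries

variable {k : Type*} [Field k]

theorem inv_one_sub_X : ((1 - X : k⟦X⟧))⁻¹ = mk 1 :=
  (inv_eq_iff_mul_eq_one (by simp)).2 (mk_one_mul_one_sub_eq_one k)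

/-- With `m = 0` the formula reads `(d - 1).choose d`, which is `1` at `d = 0` and `0` after. -/
theorem coeff_inv_one_sub_X_pow (m d : ℕ) :
    coeff d (((1 - X : k⟦X⟧))⁻¹ ^ m) = ((m + d - 1).choose d : k) := by
  rcases m with _ | m
  · rcases d with _ | d <;> simp [coeff_one]
  · rw [inv_one_sub_X, mk_one_pow_eq_mk_choose_add, coeff_mk, Nat.add_right_comm,
      Nat.add_sub_cancel, Nat.choose_symm_add]

end PowerSeries

theorem Nat.card_strictMono_fin (s : ℕ) (α : Type*) [LinearOrder α] :
    Nat.card {f : Fin s → α // StrictMono f} = (Nat.card α).choose s := by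
  let e : {f : Fin s → α // StrictMono f} ≃ (Fin s ↪o α) :=
    { toFun f := OrderEmbedding.ofStrictMono f.1 f.2
      invFun f := ⟨f, f.strictMono⟩
      left_inv _ := rfl
      right_inv _ := rfl }
  rw [Nat.card_congr (e.trans Set.powersetCard.ofFinEmbEquiv), Set.powersetCard.card]

theorem Nat.card_fun_sum_eq (ι : Type*) [Fintype ι] (d : ℕ) :
    Nat.card {f : ι → ℕ // ∑ i, f i = d} = (Fintype.card ι + d - 1).choose d := by
  classical
  rw [← Nat.card_congr (Sym.equivNatSumOfFintype ι d), Nat.card_eq_fintype_card,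
    Sym.card_sym_eq_choose]

theorem Nat.card_fixedPointData (s d : ℕ) (α : Type*) [LinearOrder α] :
    Nat.card {x : (Fin s → ℕ) × (Fin s → ℕ) × (Fin s → α) //
        (∑ k, (x.1 k + x.2.1 k)) = d ∧ StrictMono x.2.2} =
      (2 * s + d - 1).choose d * (Nat.card α).choose s := by
  let e : {x : (Fin s → ℕ) × (Fin s → ℕ) × (Fin s → α) //
        (∑ k, (x.1 k + x.2.1 k)) = d ∧ StrictMono x.2.2} ≃
      {f : Fin s ⊕ Fin s → ℕ // ∑ i, f i = d} × {c : Fin s → α // StrictMono c} :=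
    { toFun x := (⟨Sum.elim x.1.1 x.1.2.1, by simpa [sum_add_distrib] using x.2.1⟩,
        ⟨x.1.2.2, x.2.2⟩)
      invFun p := ⟨(p.1.1 ∘ Sum.inl, p.1.1 ∘ Sum.inr, p.2.1),
        by simpa [sum_add_distrib] using p.1.2, p.2.2⟩
      left_inv _ := rfl
      right_inv p := by ext (_ | _) <;> rfl }
  rw [Nat.card_congr e, Nat.card_prod, Nat.card_fun_sum_eq, Nat.card_strictMono_fin,
    Fintype.card_sum, Fintype.card_fin, two_mul]

theorem Nat.sum_range_choose_mul_choose_eq (s d : ℕ) (hs : 0 < s) :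
    ∑ e ∈ range (d + 1), (e + s - 1).choose (s - 1) * (d - e + s - 1).choose (s - 1) =
      (2 * s + d - 1).choose d := by
  have hpow := congrArg (coeff d) (pow_add ((1 - X : ℚ⟦X⟧))⁻¹ s s)
  rw [coeff_mul, Nat.sum_antidiagonal_eq_sum_range_succ_mk] at hpow
  simp only [coeff_inv_one_sub_X_pow, ← two_mul] at hpow
  calc ∑ e ∈ range (d + 1), (e + s - 1).choose (s - 1) * (d - e + s - 1).choose (s - 1)
      = ∑ e ∈ range (d + 1), (s + e - 1).choose e * (s + (d - e) - 1).choose (d - e) :=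
        sum_congr rfl fun e _ => by
          rw [Nat.choose_symm_of_eq_add (by omega : e + s - 1 = (s - 1) + e),
            Nat.choose_symm_of_eq_add (by omega : d - e + s - 1 = (s - 1) + (d - e)),
            Nat.add_comm e, Nat.add_comm (d - e)]
    _ = (2 * s + d - 1).choose d := by exact_mod_cast hpow.symm

/-- Euler characteristic of the Quot scheme `HQ_d(G^r(n))`: the number of fixed-point
data `(a, b, c)` — sequences of length `s = n - r` with `a_k, b_k ≥ 0`,
`Σ (a_k + b_k) = d`, and `1 ≤ c_1 < ... < c_s ≤ n` — equals `C(n, r)` times the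
coefficient of `t^d` in `(1-t)^{-2(n-r)}`; explicitly (for `r < n`) it is
`C(n,r) Σ_{e=0}^d C(e+n-r-1, n-r-1) C(d-e+n-r-1, n-r-1)`. -/
theorem stmt16 (n r d : ℕ) (hr : r ≤ n) :
    ((Nat.card {x : (Fin (n - r) → ℕ) × (Fin (n - r) → ℕ) × (Fin (n - r) → Fin n) //
        (∑ k, (x.1 k + x.2.1 k)) = d ∧ StrictMono x.2.2} : ℚ) =
      (n.choose r : ℚ) *
        PowerSeries.coeff (R := ℚ) d (((1 - PowerSeries.X : PowerSeries ℚ))⁻¹ ^ (2 * (n - r)))) ∧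
    (r < n →
      Nat.card {x : (Fin (n - r) → ℕ) × (Fin (n - r) → ℕ) × (Fin (n - r) → Fin n) //
        (∑ k, (x.1 k + x.2.1 k)) = d ∧ StrictMono x.2.2} =
      n.choose r * ∑ e ∈ Finset.range (d + 1),
        (e + (n - r) - 1).choose ((n - r) - 1) * (d - e + (n - r) - 1).choose ((n - r) - 1)) := by
  rw [Nat.card_fixedPointData, Nat.card_fin, Nat.choose_symm hr]
  refine ⟨?_, fun hrn => ?_⟩
  · rw [coeff_inv_one_sub_X_pow, Nat.cast_mul, mul_comm]
  · rw [Nat.sum_range_choose_mul_choose_eq _ _ (Nat.sub_pos_of_lt hrn), mul_comm]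
end
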